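/- arXiv:0709.4509 — 5 statements merged into one kernel-verified Lean document; each statement's English description precedes it below -/
import Mathlib

section
/- For any partition λ = (λ₁, λ₂, …, λ_ℓ), applying the Bernstein operators in sequence yields the Schur function: B_{λ₁} B_{λ₂} ⋯ B_{λ_ℓ} · 1 = s_λ. -/
open scoped Classical

namespace KSchur

noncomputable section

/-! Partitions as weakly decreasing, eventually-zero functions `ℕ → ℕ`
(rows indexed from 0; row 0 is the bottom row, as in the paper). -/

def IsPartitionFun (f : ℕ → ℕ) : Prop :=
  (∀ ⦃i j : ℕ⦄, i ≤ j → f j ≤ f i) ∧ ∃ N, f N = 0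

def IsKBounded (k : ℕ) (f : ℕ → ℕ) : Prop := ∀ i, f i ≤ k

/-- the number of cells of a partition -/
def sizeP (f : ℕ → ℕ) : ℕ := Nat.card {p : ℕ × ℕ | p.2 < f p.1}

/-- column lengths (the conjugate partition) -/
def colLen (f : ℕ → ℕ) (j : ℕ) : ℕ := Nat.card {i : ℕ | j < f i}

/-- hook length of the (0-indexed) cell `(i,j)` -/
def hookLen (f : ℕ → ℕ) (i j : ℕ) : ℕ := (f i - j) + (colLen f j - i) - 1

/-- an `n`-core: no cell has hook length `n` -/
def IsCore (n : ℕ) (f : ℕ → ℕ) : Prop := ∀ i j, j < f i → hookLen f i j ≠ n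

/-- the `(k+1)`-residue of the cell `(i,j)` -/
def resid (k : ℕ) (i j : ℕ) : ZMod (k + 1) := (j : ZMod (k + 1)) - (i : ZMod (k + 1))

def Extremal (f : ℕ → ℕ) (i j : ℕ) : Prop := j < f i ∧ ¬ (j + 1 < f (i + 1))

def Removable (f : ℕ → ℕ) (i j : ℕ) : Prop := j < f i ∧ f i = j + 1 ∧ f (i + 1) ≤ j

def Addable (f : ℕ → ℕ) (i j : ℕ) : Prop := j = f i ∧ (i = 0 ∨ f i < f (i - 1))

/-- the number of `k`-bounded cells (hook length at most `k`) in row `i` -/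
def rowCount (k : ℕ) (f : ℕ → ℕ) (i : ℕ) : ℕ :=
  Nat.card {j : ℕ | j < f i ∧ hookLen f i j ≤ k}

/-- the map `𝔭` from `(k+1)`-cores to `k`-bounded partitions -/
def pmapFun (k : ℕ) (f : ℕ → ℕ) : ℕ → ℕ := rowCount k f

/-- the total number of `k`-bounded cells -/
def kBoundedCount (k : ℕ) (f : ℕ → ℕ) : ℕ :=
  Nat.card {p : ℕ × ℕ | p.2 < f p.1 ∧ hookLen f p.1 p.2 ≤ k}

/-- the map `𝔠`, inverse of `𝔭` -/
def cmap (k : ℕ) (lam : ℕ → ℕ) : ℕ → ℕ :=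
  if h : ∃ g, IsPartitionFun g ∧ IsCore (k + 1) g ∧ pmapFun k g = lam then h.choose
  else fun _ => 0

/-! The action of the affine symmetric group generators `σ_i` on `(k+1)`-cores:
remove all removable corners of residue `i` if there is one, otherwise add all
addable corners of residue `i` if there is one. -/

def RemRowRes (k : ℕ) (f : ℕ → ℕ) (a : ℕ) (i : ZMod (k + 1)) : Prop :=
  0 < f a ∧ f (a + 1) < f a ∧ resid k a (f a - 1) = i

def AddRowRes (k : ℕ) (f : ℕ → ℕ) (a : ℕ) (i : ZMod (k + 1)) : Prop :=
  (a = 0 ∨ f a < f (a - 1)) ∧ resid k a (f a) = i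

def coreAct (k : ℕ) (i : ZMod (k + 1)) (f : ℕ → ℕ) : ℕ → ℕ :=
  if ∃ a, RemRowRes k f a i then fun a => if RemRowRes k f a i then f a - 1 else f a
  else if ∃ a, AddRowRes k f a i then fun a => if AddRowRes k f a i then f a + 1 else f a
  else f

/-- action of a word in the generators (rightmost letter acts first) -/
def wordActZM (k : ℕ) (L : List (ZMod (k + 1))) (f : ℕ → ℕ) : ℕ → ℕ :=
  L.foldr (fun i g => coreAct k i g) f

def wordActZ (k : ℕ) (L : List ℤ) (f : ℕ → ℕ) : ℕ → ℕ :=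
  wordActZM k (L.map fun t => ((t : ℤ) : ZMod (k + 1))) f

/-- the word `σ_r σ_{r+1} ⋯ σ_{s-2} σ_{s-1} σ_{s-2} ⋯ σ_{r+1} σ_r` (as a list of integers,
read left to right) -/
def trsList (r s : ℤ) : List ℤ :=
  ((List.range (s - r).toNat).map fun t => r + t) ++
    (((List.range ((s - r).toNat - 1)).map fun t => r + t).reverse)

/-- action of the transposition `t_{r,s}` on `(k+1)`-cores -/
def trsAct (k : ℕ) (r s : ℤ) (f : ℕ → ℕ) : ℕ → ℕ := wordActZ k (trsList r s) f

/-! `σ_A` for a subset `A ⊆ ℤ_{k+1}`: the product, over the maximal cyclic components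
`[a,b]` of `A`, of `σ_b σ_{b-1} ⋯ σ_a`. -/

/-- the length of the maximal cyclic run of `A` starting at `a` -/
def runLen (k : ℕ) (A : Finset (ZMod (k + 1))) (a : ZMod (k + 1)) : ℕ :=
  if h : ∃ m : ℕ, a + ((m + 1 : ℕ) : ZMod (k + 1)) ∉ A then Nat.find h + 1 else 0

/-- the word `σ_{a+m-1} ⋯ σ_{a+1} σ_a` for the cyclic component of `A` starting at `a` -/
def compWord (k : ℕ) (A : Finset (ZMod (k + 1))) (a : ZMod (k + 1)) : List (ZMod (k + 1)) :=
  ((List.range (runLen k A a)).map fun t => a + (t : ℕ)).reverse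

/-- the action of `σ_A` on `(k+1)`-cores (the cyclic components commute; we compose
them in increasing order of the representative of their starting residue) -/
def sigmaSet (k : ℕ) (A : Finset (ZMod (k + 1))) (f : ℕ → ℕ) : ℕ → ℕ :=
  wordActZM k
    (((((A.filter fun a => a - 1 ∉ A).image fun a => ZMod.val a).sort (· ≤ ·)).map
        fun av => compWord k A ((av : ℕ) : ZMod (k + 1))).flatten) f

/-! Vertical `(k,ℓ)`-strips. -/

/-- `f/g` is a (disjoint) union of horizontal ribbons: no two cells of the skew diagram
are vertically adjacent -/
def HorizRibbons (f g : ℕ → ℕ) : Prop :=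
  (∀ a, g a ≤ f a) ∧
    ∀ a b, (g a ≤ b ∧ b < f a) → ¬(g (a + 1) ≤ b ∧ b < f (a + 1))

/-- `g ⋖ f` with `f/g` a union of horizontal ribbons whose lowest component is in row `rr` -/
def CoverHoriz (k : ℕ) (f g : ℕ → ℕ) (rr : ℕ) : Prop :=
  IsPartitionFun g ∧ IsCore (k + 1) g ∧
    kBoundedCount k f = kBoundedCount k g + 1 ∧ HorizRibbons f g ∧
    g rr < f rr ∧ ∀ a < rr, f a = g a

/-- the number of rows of the main subpartition of `ghat` (relative to `g`) -/
def mainLen (k : ℕ) (g ghat : ℕ → ℕ) : ℕ :=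
  Nat.card {a : ℕ | g 0 - rowCount k g 0 < ghat a}

def VertStripChain (k l : ℕ) (g ghat δ : ℕ → ℕ) (w : ℕ → ℕ → ℕ) (r : ℕ → ℕ) : Prop :=
  w 0 = ghat ∧ w l = δ ∧ (∀ i < l, CoverHoriz k (w i) (w (i + 1)) (r i)) ∧
    (∀ i < l, r i < mainLen k g ghat) ∧
    ∀ i j, i < l → j < l → r i = r j → i = j

/-- `δ` is obtained from `ghat` by removing a vertical `(k,ℓ)`-strip
(`ghat` being the truncated core of the core `g`) -/
def RemVertStrip (k l : ℕ) (g ghat δ : ℕ → ℕ) : Prop :=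
  ∃ w r, VertStripChain k l g ghat δ w r

/-- `γ̂` : the core of `𝔭(γ)` with its first part removed -/
def hatCore (k : ℕ) (g : ℕ → ℕ) : ℕ → ℕ := cmap k fun i => rowCount k g (i + 1)

/-! OX diagrams, the sets `𝒟` and `𝒞`, changeable cells. -/

def DSet (k : ℕ) (lam : ℕ → ℕ) : Set ((ℕ → ℕ) × Finset (ZMod (k + 1))) :=
  {p | ∃ l ≤ k - lam 0,
      RemVertStrip k l (cmap k lam) (hatCore k (cmap k lam)) p.1 ∧
      p.2.card = lam 0 + l ∧ kBoundedCount k (sigmaSet k p.2 p.1) = sizeP lam}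

/-- a changeable cell of `(δ, A)`: a cell of `σ_A(δ)` at the top of its column and
belonging to `γ̂` -/
def IsChangeable (k : ℕ) (lam δ : ℕ → ℕ) (A : Finset (ZMod (k + 1))) (c : ℕ × ℕ) : Prop :=
  c.2 < sigmaSet k A δ c.1 ∧ sigmaSet k A δ (c.1 + 1) ≤ c.2 ∧
    c.2 < hatCore k (cmap k lam) c.1

def CSet (k : ℕ) (lam : ℕ → ℕ) : Set ((ℕ → ℕ) × Finset (ZMod (k + 1))) :=
  {p | p ∈ DSet k lam ∧ ∃ c, IsChangeable k lam p.1 p.2 c}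

/-- an O cell of the OX diagram of `(δ, A)`: a cell of `γ̂/δ` -/
def IsOCell (k : ℕ) (lam δ : ℕ → ℕ) (c : ℕ × ℕ) : Prop :=
  δ c.1 ≤ c.2 ∧ c.2 < hatCore k (cmap k lam) c.1

/-- an OX cell: a cell of `γ̂/δ` that is also a cell of `σ_A(δ)/δ` -/
def IsOXCell (k : ℕ) (lam δ : ℕ → ℕ) (A : Finset (ZMod (k + 1))) (c : ℕ × ℕ) : Prop :=
  δ c.1 ≤ c.2 ∧ c.2 < hatCore k (cmap k lam) c.1 ∧ c.2 < sigmaSet k A δ c.1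

/-- the rightmost changeable cell of `(δ, A)` -/
def rcc (k : ℕ) (lam δ : ℕ → ℕ) (A : Finset (ZMod (k + 1))) : ℕ × ℕ :=
  if h : ∃ c, IsChangeable k lam δ A c ∧ ∀ c', IsChangeable k lam δ A c' → c'.2 ≤ c.2 then
    h.choose
  else (0, 0)

/-- the column of the leftmost OX cell in row `a` -/
def loxCol (k : ℕ) (lam δ : ℕ → ℕ) (A : Finset (ZMod (k + 1))) (a : ℕ) : ℕ :=
  if h : ∃ b, IsOXCell k lam δ A (a, b) then Nat.find h else 0

/-- the column of the leftmost changeable cell `b'` in row `a` all of whose residues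
between that of `(a,b')` (inclusive) and that of `(a,b)` (exclusive) lie in `A` -/
def caseIICol (k : ℕ) (lam δ : ℕ → ℕ) (A : Finset (ZMod (k + 1))) (a b : ℕ) : ℕ :=
  if h : ∃ b', IsChangeable k lam δ A (a, b') ∧
      ∀ t : ℤ, (b' : ℤ) - (a : ℤ) ≤ t → t < (b : ℤ) - (a : ℤ) →
        ((t : ℤ) : ZMod (k + 1)) ∈ A then
    Nat.find h
  else b

/-- the involution `φ` of the paper -/
def phiInv (k : ℕ) (lam : ℕ → ℕ) (p : (ℕ → ℕ) × Finset (ZMod (k + 1))) :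
    (ℕ → ℕ) × Finset (ZMod (k + 1)) :=
  let δ := p.1
  let A := p.2
  let c := rcc k lam δ A
  if IsOXCell k lam δ A c then
    (trsAct k ((loxCol k lam δ A c.1 : ℤ) - (c.1 : ℤ)) ((c.2 : ℤ) - (c.1 : ℤ) + 1) δ,
      A.erase (resid k c.1 c.2))
  else
    (trsAct k ((caseIICol k lam δ A c.1 c.2 : ℤ) - (c.1 : ℤ)) ((c.2 : ℤ) - (c.1 : ℤ) + 1) δ,
      insert (resid k c.1 c.2) A)

/-! Skew diagrams, connectivity, ribbons. -/

def skewSet (g δ : ℕ → ℕ) : Set (ℕ × ℕ) := {p | δ p.1 ≤ p.2 ∧ p.2 < g p.1}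

def adjCell (p q : ℕ × ℕ) : Prop :=
  (p.1 = q.1 ∧ (p.2 + 1 = q.2 ∨ q.2 + 1 = p.2)) ∨
    (p.2 = q.2 ∧ (p.1 + 1 = q.1 ∨ q.1 + 1 = p.1))

def connIn (S : Set (ℕ × ℕ)) (p q : ℕ × ℕ) : Prop :=
  Relation.ReflTransGen (fun x y => adjCell x y ∧ x ∈ S ∧ y ∈ S) p q

/-- the connected component of `p` in `S` -/
def compOf (S : Set (ℕ × ℕ)) (p : ℕ × ℕ) : Set (ℕ × ℕ) := {q | q ∈ S ∧ connIn S p q}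

/-- the head (southeast-most cell, i.e. the cell of maximal content) of the
component of `q` -/
def IsHead (S : Set (ℕ × ℕ)) (q : ℕ × ℕ) : Prop :=
  q ∈ S ∧ ∀ p ∈ S, connIn S q p → (p.2 : ℤ) - (p.1 : ℤ) ≤ (q.2 : ℤ) - (q.1 : ℤ)

/-! A model of the ring of symmetric functions: coefficient functions in the Schur
basis.  `schurB lam` is the Schur function `s_lam`. -/

abbrev SymF := (ℕ → ℕ) → ℤ

def schurB (lam : ℕ → ℕ) : SymF := fun μ => if μ = lam then 1 else 0

/-- the Hall inner product (Schur functions are orthonormal) -/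
def hallIP (f g : SymF) : ℤ := ∑ᶠ lam, f lam * g lam

/-- `lam/μ` is a vertical `m`-strip -/
def IsVStrip (μ lam : ℕ → ℕ) (m : ℕ) : Prop :=
  (∀ i, μ i ≤ lam i) ∧ (∀ i, lam i - μ i ≤ 1) ∧ sizeP lam = sizeP μ + m

/-- `lam/μ` is a horizontal `m`-strip -/
def IsHStrip (μ lam : ℕ → ℕ) (m : ℕ) : Prop :=
  (∀ i, μ i ≤ lam i) ∧ (∀ i, lam (i + 1) ≤ μ i) ∧ sizeP lam = sizeP μ + m

/-- multiplication by the elementary symmetric function `e_m` (Pieri rule) -/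
def mulE (m : ℕ) (f : SymF) : SymF := fun μ =>
  if IsPartitionFun μ then ∑ᶠ lam ∈ {lam | IsPartitionFun lam ∧ IsVStrip lam μ m}, f lam
  else 0

/-- multiplication by the complete homogeneous symmetric function `h_m` (Pieri rule) -/
def mulH (m : ℕ) (f : SymF) : SymF := fun μ =>
  if IsPartitionFun μ then ∑ᶠ lam ∈ {lam | IsPartitionFun lam ∧ IsHStrip lam μ m}, f lam
  else 0

/-- the operator `e_m^⊥` -/
def eperp (m : ℕ) (f : SymF) : SymF := fun μ =>
  if IsPartitionFun μ then ∑ᶠ lam ∈ {lam | IsPartitionFun lam ∧ IsVStrip μ lam m}, f lam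
  else 0

/-- the Bernstein operator `B_n = Σ_{i ≥ 0} (-1)^i h_{n+i} e_i^⊥` -/
def Bop (n : ℕ) (f : SymF) : SymF := fun μ =>
  ∑ᶠ i : ℕ, (-1 : ℤ) ^ i * mulH (n + i) (eperp i f) μ

/-! The affine symmetric group by its Coxeter presentation. -/

def coxRels (k : ℕ) : Set (FreeGroup (ZMod (k + 1))) :=
  {w | (∃ i : ZMod (k + 1), w = FreeGroup.of i * FreeGroup.of i) ∨
    (∃ i : ZMod (k + 1),
      w = FreeGroup.of i * FreeGroup.of (i + 1) * FreeGroup.of i *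
        (FreeGroup.of (i + 1) * FreeGroup.of i * FreeGroup.of (i + 1))⁻¹) ∨
    ∃ i j : ZMod (k + 1), i - j ≠ 1 ∧ j - i ≠ 1 ∧
      w = FreeGroup.of i * FreeGroup.of j * (FreeGroup.of j * FreeGroup.of i)⁻¹}

/-- the generator `σ_t` (for an integer `t`, read modulo `k+1`) -/
def sigmaGen (k : ℕ) (t : ℤ) : PresentedGroup (coxRels k) :=
  PresentedGroup.of ((t : ℤ) : ZMod (k + 1))

/-- the transposition `t_{r,s} = σ_r σ_{r+1} ⋯ σ_{s-2} σ_{s-1} σ_{s-2} ⋯ σ_{r+1} σ_r` -/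
def trsElt (k : ℕ) (r s : ℤ) : PresentedGroup (coxRels k) :=
  ((trsList r s).map (sigmaGen k)).prod

/-! The `k`-Schur functions at `t = 1`, via the triangular system defining them in
terms of the complete homogeneous symmetric functions.  We model the ring
`Λ = ℤ[h₁, h₂, …]` as the polynomial ring `MvPolynomial ℕ ℤ`, `X m` standing for
`h_m`. -/

def hMono (lam : ℕ → ℕ) : MvPolynomial ℕ ℤ :=
  ∏ᶠ i : ℕ, if lam i = 0 then 1 else MvPolynomial.X (lam i)

def numParts (f : ℕ → ℕ) : ℕ := Nat.card {i : ℕ | f i ≠ 0}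

/-- `T` is a `k`-tableau of shape the `(k+1)`-core `g` and `k`-weight `α` -/
def IsKTableau (k : ℕ) (g α : ℕ → ℕ) (T : ℕ × ℕ → ℕ) : Prop :=
  (∀ p : ℕ × ℕ, ¬p.2 < g p.1 → T p = 0) ∧
    (∀ a b, b < g a → 1 ≤ T (a, b) ∧ T (a, b) ≤ numParts α) ∧
    (∀ a b b', b ≤ b' → b' < g a → T (a, b) ≤ T (a, b')) ∧
    (∀ a a' b, a < a' → b < g a' → T (a, b) < T (a', b)) ∧
    ∀ m, 1 ≤ m → m ≤ numParts α →
      Nat.card {ρ : ZMod (k + 1) | ∃ a b, b < g a ∧ T (a, b) = m ∧ resid k a b = ρ} = α (m - 1)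

/-- the `k`-Kostka number `K^{(k)}_{μ lam}` -/
def Kcoef (k : ℕ) (μ lam : ℕ → ℕ) : ℕ :=
  Nat.card {x : (ℕ → ℕ) × (ℕ × ℕ → ℕ) //
    IsPartitionFun x.1 ∧ IsCore (k + 1) x.1 ∧ pmapFun k x.1 = μ ∧ IsKTableau k x.1 lam x.2}

/-- `s` is the family of `k`-Schur functions (at `t = 1`):
`h_lam = Σ_μ K^{(k)}_{μ lam} s_μ` for all `k`-bounded partitions `lam` -/
def IsKSchurFamily (k : ℕ) (s : (ℕ → ℕ) → MvPolynomial ℕ ℤ) : Prop :=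
  ∀ lam : ℕ → ℕ, IsPartitionFun lam → IsKBounded k lam →
    hMono lam =
      ∑ᶠ μ ∈ {μ : ℕ → ℕ | IsPartitionFun μ ∧ IsKBounded k μ ∧ sizeP μ = sizeP lam},
        (Kcoef k μ lam : ℤ) • s μ

/-- the sequences `S = (γ⁽⁰⁾, …, γ⁽ʳ⁾)` of Corollary: encoded as `(r, G, L)` where
`γ⁽ⁱ⁾ = G i` and `ℓ_{i+1} = L i`. -/
def SeqSet (k : ℕ) (g : ℕ → ℕ) : Set (ℕ × (ℕ → ℕ → ℕ) × (ℕ → ℕ)) :=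
  {x | x.2.1 0 = (fun _ => 0) ∧ x.2.1 x.1 = g ∧
    (∀ i, x.1 ≤ i → x.2.1 i = g ∧ x.2.2 i = 0) ∧
    ∀ i < x.1,
      IsPartitionFun (x.2.1 (i + 1)) ∧ IsCore (k + 1) (x.2.1 (i + 1)) ∧
        (∀ a, x.2.1 i a ≤ x.2.1 (i + 1) a) ∧ x.2.1 i ≠ x.2.1 (i + 1) ∧ x.2.2 i ≤ k ∧
        RemVertStrip k (x.2.2 i) (x.2.1 (i + 1)) (hatCore k (x.2.1 (i + 1))) (x.2.1 i)}

/-!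
Expand `B_n s_ν` in the Schur basis by the Pieri rules: `e_i^⊥` removes one cell from each row
of a set `S` of rows of `ν`, and `h_{n+i}` then adds a horizontal strip. For a target `μ` of the
right size, whether row `j` may lose its cell depends on row `j` alone, so the signed sum over `S`
factors as `∏_j ([ν_j = μ_{j+1}] - [ν_j = μ_j + 1])`. If no factor vanishes, then
`μ_{j+1} ≤ ν_j` for all `j`, so the size condition gives `μ_0 ≥ n ≥ ν_0`; this rules out
`ν_0 = μ_0 + 1`, and monotonicity of `ν` propagates `ν_j = μ_{j+1}` upwards, so `μ = (n, ν)`.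
Hence `B_n s_ν = s_{(n, ν)}` whenever `ν_0 ≤ n`, and the theorem follows by induction on `ℓ`.
-/

open Finset

theorem sum_powerset_filter_neg_one_pow_card {ι R : Type*} [CommRing R] [DecidableEq ι]
    (s : Finset ι) (p q : ι → Prop) [DecidablePred p] [DecidablePred q] :
    ∑ t ∈ s.powerset with (∀ i ∈ t, p i) ∧ ∀ i ∈ s \ t, q i, (-1 : R) ^ t.card =
      ∏ i ∈ s, ((if q i then 1 else 0) - if p i then 1 else 0) := by
  simp_rw [sub_eq_neg_add]
  rw [prod_add, sum_filter]
  refine sum_congr rfl fun t _ => ?_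
  rw [prod_neg, prod_boole, prod_boole]
  split_ifs <;> simp_all

theorem IsPartitionFun.eq_zero_of_le {f : ℕ → ℕ} (hf : IsPartitionFun f) {N : ℕ} (hN : f N = 0)
    {j : ℕ} (hj : N ≤ j) : f j = 0 :=
  Nat.le_zero.1 (hN ▸ hf.1 hj)

theorem sizeP_eq_sum_range {f : ℕ → ℕ} {N : ℕ} (hf : ∀ i, N ≤ i → f i = 0) :
    sizeP f = ∑ i ∈ range N, f i := by
  have hcells : {p : ℕ × ℕ | p.2 < f p.1} =
      ↑((range N).biUnion fun i => {i} ×ˢ range (f i)) := by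
    ext ⟨i, j⟩
    simp only [Set.mem_ofPred_eq, coe_biUnion, mem_coe, mem_range, mem_product, mem_singleton,
      Set.mem_iUnion, exists_prop]
    constructor
    · intro hj
      exact ⟨i, not_le.1 fun hi => by simp [hf i hi] at hj, rfl, hj⟩
    · rintro ⟨_, _, rfl, hj⟩
      exact hj
  rw [sizeP, hcells, Nat.card_coe_set_eq, Set.ncard_coe_finset, card_biUnion]
  · simp
  · intro i _ i' _ hii'
    simp [Function.onFun, disjoint_left, hii'.symm]

theorem IsHStrip.isPartitionFun {lam μ : ℕ → ℕ} {m : ℕ} (h : IsHStrip lam μ m)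
    (hμ : IsPartitionFun μ) : IsPartitionFun lam := by
  obtain ⟨N, hN⟩ := hμ.2
  exact ⟨antitone_nat_of_succ_le fun i => (h.1 (i + 1)).trans (h.2.1 i),
    N, Nat.le_zero.1 (hN ▸ h.1 N)⟩

def consPart (n : ℕ) (ν : ℕ → ℕ) : ℕ → ℕ
  | 0 => n
  | j + 1 => ν j

theorem consPart_head_tail (f : ℕ → ℕ) : consPart (f 0) (fun i => f (i + 1)) = f := by
  funext i
  cases i <;> rfl

theorem isPartitionFun_consPart {n : ℕ} {ν : ℕ → ℕ} (hν : IsPartitionFun ν) (hn : ν 0 ≤ n) :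
    IsPartitionFun (consPart n ν) := by
  obtain ⟨N, hN⟩ := hν.2
  refine ⟨antitone_nat_of_succ_le fun i => ?_, N + 1, hN⟩
  cases i with
  | zero => exact hn
  | succ i => exact hν.1 i.le_succ

theorem sizeP_consPart {n N : ℕ} {ν : ℕ → ℕ} (hN : ∀ j, N ≤ j → ν j = 0) :
    sizeP (consPart n ν) = sizeP ν + n := by
  rw [sizeP_eq_sum_range (N := N + 1) fun j hj => ?_, sizeP_eq_sum_range hN, sum_range_succ']
  · rfl
  · cases j with
    | zero => omega
    | succ j => exact hN j (by omega)

def removeRows (ν : ℕ → ℕ) (S : Finset ℕ) (j : ℕ) : ℕ := if j ∈ S then ν j - 1 else ν j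

def removableRowSets (ν : ℕ → ℕ) (N : ℕ) : Finset (Finset ℕ) :=
  {S ∈ (range N).powerset | ∀ j ∈ S, 0 < ν j}

section RemoveRows

variable {ν : ℕ → ℕ} {N : ℕ}

theorem mem_removableRowSets (hN : ∀ j, N ≤ j → ν j = 0) {S : Finset ℕ} :
    S ∈ removableRowSets ν N ↔ ∀ j ∈ S, 0 < ν j := by
  refine ⟨fun h => (mem_filter.1 h).2, fun h => mem_filter.2 ⟨mem_powerset.2 ?_, h⟩⟩
  exact fun j hj => mem_range.2 (not_le.1 fun hNj => (h j hj).ne' (hN j hNj))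

theorem card_le_of_mem_removableRowSets {S : Finset ℕ} (hS : S ∈ removableRowSets ν N) :
    S.card ≤ N :=
  card_range N ▸ card_le_card (mem_powerset.1 (mem_filter.1 hS).1)

theorem removeRows_injOn : Set.InjOn (removeRows ν) {S | ∀ j ∈ S, 0 < ν j} := by
  intro S hS T hT hST
  ext j
  have hj := congrFun hST j
  have hSj := hS j
  have hTj := hT j
  unfold removeRows at hj
  by_cases hjS : j ∈ S <;> by_cases hjT : j ∈ T <;>
    simp only [hjS, hjT, if_true, if_false, true_implies, iff_self] at hj hSj hTj ⊢ <;> omega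

theorem sizeP_removeRows_add_card (hN : ∀ j, N ≤ j → ν j = 0) {S : Finset ℕ}
    (hS : ∀ j ∈ S, 0 < ν j) : sizeP (removeRows ν S) + S.card = sizeP ν := by
  have hSN := mem_powerset.1 (mem_filter.1 ((mem_removableRowSets hN).2 hS)).1
  have hcard : S.card = ∑ j ∈ range N, if j ∈ S then 1 else 0 := by
    rw [sum_ite_mem, inter_eq_right.2 hSN, card_eq_sum_ones]
  rw [sizeP_eq_sum_range (N := N) fun j hj => by simp [removeRows, hN j hj],
    sizeP_eq_sum_range hN, hcard, ← sum_add_distrib]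
  refine sum_congr rfl fun j _ => ?_
  unfold removeRows
  split_ifs with hj
  · have := hS j hj
    omega
  · rfl

theorem isVStrip_iff_exists_removeRows (hN : ∀ j, N ≤ j → ν j = 0) {lam : ℕ → ℕ} {i : ℕ} :
    IsVStrip lam ν i ↔ ∃ S, (∀ j ∈ S, 0 < ν j) ∧ S.card = i ∧ removeRows ν S = lam := by
  constructor
  · rintro ⟨hle, hdiff, hsize⟩
    set S := (range N).filter fun j => lam j ≠ ν j
    have hS : ∀ j ∈ S, 0 < ν j := fun j hj => by
      have := hle j
      have := (mem_filter.1 hj).2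
      omega
    have hrem : removeRows ν S = lam := funext fun j => by
      have := hle j
      have := hdiff j
      have := hN j
      simp only [removeRows, S, mem_filter, mem_range]
      split_ifs <;> omega
    refine ⟨S, hS, ?_, hrem⟩
    have := sizeP_removeRows_add_card hN hS
    rw [hrem] at this
    omega
  · rintro ⟨S, hS, rfl, rfl⟩
    refine ⟨fun j => ?_, fun j => ?_, (sizeP_removeRows_add_card hN hS).symm⟩ <;>
      unfold removeRows <;> split_ifs <;> omega

end RemoveRows

theorem finsum_mem_schurB (s : Set (ℕ → ℕ)) (ν : ℕ → ℕ) :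
    ∑ᶠ lam ∈ s, schurB ν lam = if ν ∈ s then 1 else 0 := by
  have hsupp : Function.support (schurB ν) = {ν} := by
    ext lam
    simp [schurB]
  split_ifs with hν
  · rw [finsum_mem_inter_support_eq _ s {ν} (by simp [hsupp, hν]), finsum_mem_singleton, schurB,
      if_pos rfl]
  · rw [finsum_mem_inter_support_eq _ s ∅ (by simp [hsupp, hν]), finsum_mem_empty]

section SchurExpansion

variable {n N : ℕ} {ν μ : ℕ → ℕ}

theorem eperp_schurB_apply (hν : IsPartitionFun ν) (i : ℕ) (lam : ℕ → ℕ) :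
    eperp i (schurB ν) lam = if IsPartitionFun lam ∧ IsVStrip lam ν i then 1 else 0 := by
  unfold eperp
  rw [finsum_mem_schurB]
  by_cases hlam : IsPartitionFun lam <;> simp [hlam, hν]

theorem mulH_eperp_schurB_apply (hν : IsPartitionFun ν) (hN : ∀ j, N ≤ j → ν j = 0)
    (hμ : IsPartitionFun μ) (m i : ℕ) :
    mulH m (eperp i (schurB ν)) μ =
      #{S ∈ removableRowSets ν N | S.card = i ∧ IsHStrip (removeRows ν S) μ m} := by
  set F := {S ∈ removableRowSets ν N | S.card = i ∧ IsHStrip (removeRows ν S) μ m}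
  have hF : ∀ S ∈ F, ∀ j ∈ S, 0 < ν j := fun S hS =>
    (mem_removableRowSets hN).1 (mem_filter.1 hS).1
  unfold mulH
  simp_rw [if_pos hμ, eperp_schurB_apply hν]
  rw [finsum_mem_eq_sum_of_inter_support_eq _ (t := F.image (removeRows ν)), sum_image
    fun S hS T hT => removeRows_injOn (hF S hS) (hF T hT)]
  · rw [sum_congr rfl fun S hS => if_pos ?_, sum_const, nsmul_one]
    obtain ⟨-, hcard, hH⟩ := mem_filter.1 hS
    exact ⟨hH.isPartitionFun hμ, (isVStrip_iff_exists_removeRows hN).2 ⟨S, hF S hS, hcard, rfl⟩⟩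
  · ext lam
    simp only [Set.mem_inter_iff, Set.mem_ofPred_eq, Function.mem_support, ne_eq,
      ite_eq_right_iff, one_ne_zero, imp_false, not_not, coe_image, Set.mem_image, mem_coe]
    constructor
    · rintro ⟨⟨-, hH⟩, hlam, hV⟩
      obtain ⟨S, hS, hcard, rfl⟩ := (isVStrip_iff_exists_removeRows hN).1 hV
      exact ⟨⟨S, mem_filter.2 ⟨(mem_removableRowSets hN).2 hS, hcard, hH⟩, rfl⟩, hlam, hV⟩
    · rintro ⟨⟨S, hS, rfl⟩, hlam, hV⟩
      exact ⟨⟨hlam, (mem_filter.1 hS).2.2⟩, hlam, hV⟩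

theorem Bop_schurB_apply_eq_sum (hν : IsPartitionFun ν) (hN : ∀ j, N ≤ j → ν j = 0)
    (hμ : IsPartitionFun μ) (n : ℕ) :
    Bop n (schurB ν) μ =
      ∑ S ∈ removableRowSets ν N with IsHStrip (removeRows ν S) μ (n + S.card), (-1) ^ S.card := by
  set G := {S ∈ removableRowSets ν N | IsHStrip (removeRows ν S) μ (n + S.card)}
  have hG : ∀ S ∈ G, S.card < N + 1 := fun S hS =>
    Nat.lt_succ_of_le (card_le_of_mem_removableRowSets (mem_filter.1 hS).1)
  have hterm : ∀ i, (-1) ^ i * mulH (n + i) (eperp i (schurB ν)) μ =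
      ∑ S ∈ G with S.card = i, (-1) ^ S.card := fun i => by
    rw [mulH_eperp_schurB_apply hν hN hμ, sum_congr rfl fun S hS => by rw [(mem_filter.1 hS).2],
      sum_const, nsmul_eq_mul, mul_comm, filter_filter]
    congr 3
    refine filter_congr fun S _ => ⟨fun ⟨hc, hH⟩ => ?_, fun ⟨hH, hc⟩ => ?_⟩ <;> subst hc
    exacts [⟨hH, rfl⟩, ⟨rfl, hH⟩]
  unfold Bop
  rw [finsum_congr hterm, finsum_eq_sum_of_support_subset _ (s := range (N + 1)) ?_,
    sum_fiberwise_of_maps_to fun S hS => mem_range.2 (hG S hS)]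
  intro i hi
  rw [coe_range, Set.mem_Iio]
  by_contra hiN
  refine hi (sum_eq_zero fun S hS => ?_)
  obtain ⟨hSG, rfl⟩ := mem_filter.1 hS
  exact absurd (hG S hSG) hiN

theorem filter_isHStrip_removeRows (hNν : ∀ j, N ≤ j → ν j = 0) (hNμ : ∀ j, N ≤ j → μ j = 0)
    (hsize : sizeP μ = sizeP ν + n) :
    {S ∈ removableRowSets ν N | IsHStrip (removeRows ν S) μ (n + S.card)} =
      {S ∈ (range N).powerset |
        (∀ j ∈ S, 0 < ν j ∧ ν j - 1 ≤ μ j ∧ μ (j + 1) ≤ ν j - 1) ∧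
          ∀ j ∈ range N \ S, ν j ≤ μ j ∧ μ (j + 1) ≤ ν j} := by
  ext S
  simp only [removableRowSets, mem_filter]
  constructor
  · rintro ⟨⟨hSN, hpos⟩, hle, hge, -⟩
    refine ⟨hSN, fun j hj => ?_, fun j hj => ?_⟩
    · have := hle j
      have := hge j
      simp only [removeRows, if_pos hj] at *
      exact ⟨hpos j hj, by omega⟩
    · have := hle j
      have := hge j
      simp only [removeRows, if_neg (mem_sdiff.1 hj).2] at *
      omega
  · rintro ⟨hSN, hin, hout⟩
    have hpos : ∀ j ∈ S, 0 < ν j := fun j hj => (hin j hj).1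
    have hrow : ∀ j, removeRows ν S j ≤ μ j ∧ μ (j + 1) ≤ removeRows ν S j := fun j => by
      unfold removeRows
      split_ifs with hj
      · have := hin j hj
        omega
      · by_cases hjN : j < N
        · exact hout j (mem_sdiff.2 ⟨mem_range.2 hjN, hj⟩)
        · rw [hNν j (by omega), hNμ (j + 1) (by omega)]
          omega
    have := sizeP_removeRows_add_card hNν hpos
    exact ⟨⟨hSN, hpos⟩, fun j => (hrow j).1, fun j => (hrow j).2, by omega⟩

-- The contribution of row `j`, with `a = μ (j + 1)`, `b = ν j`, `c = μ j`.
theorem boole_sub_boole_of_le {a b c : ℕ} (hac : a ≤ c) :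
    ((if b ≤ c ∧ a ≤ b then 1 else 0) - if 0 < b ∧ b - 1 ≤ c ∧ a ≤ b - 1 then 1 else 0 : ℤ) =
      (if b = a then 1 else 0) - if b = c + 1 then 1 else 0 := by
  split_ifs <;> omega

theorem eq_consPart_of_forall_eq_or_eq_succ (hν : IsPartitionFun ν) (hμ : IsPartitionFun μ)
    (hNν : ∀ j, N ≤ j → ν j = 0) (hNμ : ∀ j, N ≤ j → μ j = 0)
    (hn : ν 0 ≤ n) (hsize : sizeP μ = sizeP ν + n)
    (h : ∀ j < N, ν j = μ (j + 1) ∨ ν j = μ j + 1) : μ = consPart n ν := by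
  have hμsize : sizeP μ = μ 0 + ∑ j ∈ range N, μ (j + 1) := by
    rw [sizeP_eq_sum_range (N := N + 1) fun j hj => hNμ j (by omega), sum_range_succ', add_comm]
  have hle : ∀ j ∈ range N, μ (j + 1) ≤ ν j := fun j hj => by
    have := hμ.1 (Nat.le_add_right j 1)
    rcases h j (mem_range.1 hj) with e | e <;> omega
  have hνsize : sizeP ν = ∑ j ∈ range N, ν j := sizeP_eq_sum_range hNν
  have hn' : n ≤ μ 0 := by
    have : ∑ j ∈ range N, μ (j + 1) ≤ ∑ j ∈ range N, ν j := sum_le_sum hle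
    omega
  have htail : ∀ j, μ (j + 1) = ν j := by
    intro j
    induction j with
    | zero =>
      by_cases h0 : 0 < N
      · rcases h 0 h0 with e | e <;> omega
      · rw [hNμ 1 (by omega), hNν 0 (by omega)]
    | succ j ih =>
      by_cases hj : j + 1 < N
      · have := hν.1 (Nat.le_add_right j 1)
        rcases h (j + 1) hj with e | e <;> omega
      · rw [hNμ _ (by omega), hNν _ (by omega)]
  have hhead : μ 0 = n := by
    have : ∑ j ∈ range N, μ (j + 1) = ∑ j ∈ range N, ν j := sum_congr rfl fun j _ => htail j
    omega
  funext j
  cases j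
  exacts [hhead, htail _]

theorem prod_boole_sub_boole_eq_boole_consPart (hν : IsPartitionFun ν) (hμ : IsPartitionFun μ)
    (hNν : ∀ j, N ≤ j → ν j = 0) (hNμ : ∀ j, N ≤ j → μ j = 0)
    (hn : ν 0 ≤ n) (hsize : sizeP μ = sizeP ν + n) :
    ∏ j ∈ range N, ((if ν j = μ (j + 1) then 1 else 0) - if ν j = μ j + 1 then 1 else 0 : ℤ) =
      if μ = consPart n ν then 1 else 0 := by
  by_cases hcons : μ = consPart n ν
  · rw [if_pos hcons]
    refine prod_eq_one fun j _ => ?_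
    have h1 : μ (j + 1) = ν j := by rw [hcons]; rfl
    have := hμ.1 (Nat.le_add_right j 1)
    rw [if_pos h1.symm, if_neg (by omega), sub_zero]
  · rw [if_neg hcons, prod_eq_zero_iff]
    by_contra hne
    push Not at hne
    refine hcons (eq_consPart_of_forall_eq_or_eq_succ hν hμ hNν hNμ hn hsize fun j hj => ?_)
    have := hne j (mem_range.2 hj)
    by_contra hc
    push Not at hc
    rw [if_neg hc.1, if_neg hc.2, sub_zero] at this
    exact this rfl

theorem Bop_schurB (hν : IsPartitionFun ν) (hn : ν 0 ≤ n) :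
    Bop n (schurB ν) = schurB (consPart n ν) := by
  funext μ
  by_cases hμ : IsPartitionFun μ
  swap
  · have : μ ≠ consPart n ν := fun h => hμ (h ▸ isPartitionFun_consPart hν hn)
    simp [Bop, mulH, hμ, schurB, this]
  obtain ⟨Nν, hν0⟩ := hν.2
  obtain ⟨Nμ, hμ0⟩ := hμ.2
  set N := max Nν Nμ
  have hNν : ∀ j, N ≤ j → ν j = 0 := fun j hj => hν.eq_zero_of_le hν0 (le_of_max_le_left hj)
  have hNμ : ∀ j, N ≤ j → μ j = 0 := fun j hj => hμ.eq_zero_of_le hμ0 (le_of_max_le_right hj)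
  rw [Bop_schurB_apply_eq_sum hν hNν hμ, schurB]
  by_cases hsize : sizeP μ = sizeP ν + n
  · rw [filter_isHStrip_removeRows hNν hNμ hsize, sum_powerset_filter_neg_one_pow_card,
      prod_congr rfl fun j _ => boole_sub_boole_of_le (hμ.1 (Nat.le_add_right j 1))]
    exact prod_boole_sub_boole_eq_boole_consPart hν hμ hNν hNμ hn hsize
  · rw [if_neg fun (h : μ = consPart n ν) => hsize (h ▸ sizeP_consPart hNν),
      filter_false_of_mem, sum_empty]
    intro S hS hH
    have := sizeP_removeRows_add_card hNν ((mem_removableRowSets hNν).1 hS)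
    exact hsize (by have := hH.2.2; omega)

end SchurExpansion

/-- `B_{λ₁} B_{λ₂} ⋯ B_{λ_ℓ} · 1 = s_λ`. -/
theorem bernstein_build_schur (lam : ℕ → ℕ) (hlam : IsPartitionFun lam)
    (l : ℕ) (hl : ∀ i, l ≤ i → lam i = 0) :
    (List.range l).foldr (fun i acc => Bop (lam i) acc) (schurB fun _ => 0) = schurB lam := by
  induction l generalizing lam with
  | zero =>
    rw [show lam = fun _ => 0 from funext fun i => hl i i.zero_le]
    rfl
  | succ l ih =>
    have htail : IsPartitionFun fun i => lam (i + 1) :=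
      ⟨fun i j hij => hlam.1 (by omega), l, hl (l + 1) le_rfl⟩
    rw [List.range_succ_eq_map, List.foldr_cons, List.foldr_map,
      ih _ htail fun i hi => hl (i + 1) (by omega), Bop_schurB htail (hlam.1 (Nat.zero_le 1)),
      consPart_head_tail]

end

end KSchur
end

section
/- Let γ be a (k+1)-core and let c and c′ be extremal cells of γ with the same (k+1)-residue, with c′ weakly north-west of c. If c is at the end of its row, then so is c′; and if c has a cell of γ directly above it, then so does c′. -/
open scoped Classical

namespace KSchur

noncomputable section

/-! Auxiliary boundary-function machinery for Statement 4. -/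

/-- boundary content function: `b m = g m - m` -/
def bdry (g : ℕ → ℕ) (m : ℕ) : ℤ := (g m : ℤ) - m

lemma bdry_anti (g : ℕ → ℕ) (hg : IsPartitionFun g) {m m' : ℕ} (h : m < m') :
    bdry g m' < bdry g m := by
  have := hg.1 h.le
  unfold bdry; omega

lemma bdry_anti_le (g : ℕ → ℕ) (hg : IsPartitionFun g) {m m' : ℕ} (h : m ≤ m') :
    bdry g m' ≤ bdry g m := by
  have := hg.1 h
  unfold bdry; omega

lemma colLen_eq (g : ℕ → ℕ) (hg : IsPartitionFun g) (j L : ℕ)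
    (hlt : ∀ m < L, j < g m) (hge : ∀ m, L ≤ m → g m ≤ j) :
    colLen g j = L := by
  have hset : {i : ℕ | j < g i} = Set.Iio L := by
    ext m
    simp only [Set.mem_setOf_eq, Set.mem_Iio]
    constructor
    · intro hm
      by_contra h
      push_neg at h
      have := hge m h
      omega
    · exact hlt m
  rw [colLen, hset]
  simp

lemma core_closed (k : ℕ) (g : ℕ → ℕ) (hg : IsPartitionFun g) (hc : IsCore (k + 1) g)
    (m : ℕ) : ∃ m', bdry g m' = bdry g m - (k + 1) := by
  by_contra hno
  push_neg at hno
  set x : ℤ := bdry g m - (k + 1) with hx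
  obtain ⟨N, hN⟩ := hg.2
  have hex : ∃ M, bdry g M < x := by
    refine ⟨N + m + k + 2, ?_⟩
    have h0 : g (N + m + k + 2) = 0 := by
      have := hg.1 (show N ≤ N + m + k + 2 by omega)
      omega
    unfold bdry at hx ⊢
    rw [h0]
    push_cast
    omega
  set L := Nat.find hex with hLdef
  have hLspec : bdry g L < x := Nat.find_spec hex
  have hmin : ∀ m'' < L, x < bdry g m'' := by
    intro m'' hm
    have h1 := Nat.find_min hex hm
    have h2 := hno m''
    omega
  have hmL : m < L := by
    by_contra h
    push_neg at h
    have : bdry g m ≤ bdry g L := bdry_anti_le g hg h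
    omega
  have hL1 : 1 ≤ L := by omega
  have hgL : (g L : ℤ) - L < x := hLspec
  have hj0 : 0 ≤ x + L - 1 := by
    have : (0 : ℤ) ≤ (g L : ℤ) := by positivity
    omega
  set j : ℕ := (x + L - 1).toNat with hjdef
  have hj : (j : ℤ) = x + L - 1 := Int.toNat_of_nonneg hj0
  have hLm1 : x < bdry g (L - 1) := hmin (L - 1) (by omega)
  have hcell : ∀ m'' < L, j < g m'' := by
    intro m'' hm
    have h2 := hg.1 (show m'' ≤ L - 1 by omega)
    unfold bdry at hLm1
    omega
  have hnotcell : ∀ m'', L ≤ m'' → g m'' ≤ j := by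
    intro m'' hm
    have h2 := hg.1 hm
    unfold bdry at hLspec
    omega
  have hcol : colLen g j = L := colLen_eq g hg j L hcell hnotcell
  have hjm : j < g m := hcell m hmL
  refine hc m j hjm ?_
  rw [hookLen, hcol]
  have hbm : bdry g m = x + (k + 1) := by omega
  unfold bdry at hbm
  omega

lemma core_closed_iter (k : ℕ) (g : ℕ → ℕ) (hg : IsPartitionFun g)
    (hc : IsCore (k + 1) g) :
    ∀ (n : ℕ) (m : ℕ), ∃ m', bdry g m' = bdry g m - (n : ℤ) * ((k : ℤ) + 1) := by
  intro n
  induction n with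
  | zero => intro m; exact ⟨m, by push_cast; ring⟩
  | succ n ih =>
      intro m
      obtain ⟨m1, h1⟩ := ih m
      obtain ⟨m2, h2⟩ := core_closed k g hg hc m1
      exact ⟨m2, by rw [h2, h1]; push_cast; ring⟩

/-- extremal cells of the same residue, `c'` weakly north-west of `c`. -/
theorem extremal_northwest (k : ℕ) (g : ℕ → ℕ) (hg : IsPartitionFun g)
    (hc : IsCore (k + 1) g) (i j i' j' : ℕ)
    (h1 : Extremal g i j) (h2 : Extremal g i' j')
    (hres : resid k i j = resid k i' j') (hrow : i ≤ i') (hcol : j' ≤ j) :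
    (g i = j + 1 → g i' = j' + 1) ∧ (j < g (i + 1) → j' < g (i' + 1)) := by
  -- boundary bounds from extremality
  have hb1 : bdry g (i + 1) ≤ (j : ℤ) - i := by
    have := h1.2
    unfold bdry
    push_cast
    omega
  have hb2 : (j : ℤ) - i < bdry g i := by
    have := h1.1
    unfold bdry
    omega
  have hb1' : bdry g (i' + 1) ≤ (j' : ℤ) - i' := by
    have := h2.2
    unfold bdry
    push_cast
    omega
  have hb2' : (j' : ℤ) - i' < bdry g i' := by
    have := h2.1
    unfold bdry
    omega
  -- divisibility from equal residues
  have hdvd : ((k : ℤ) + 1) ∣ (((j : ℤ) - i) - ((j' : ℤ) - i')) := by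
    have hz : ((((j : ℤ) - i) - ((j' : ℤ) - i') : ℤ) : ZMod (k + 1)) = 0 := by
      push_cast
      rw [resid, resid] at hres
      rw [sub_eq_zero]
      exact hres
    have := (ZMod.intCast_zmod_eq_zero_iff_dvd _ _).mp hz
    exact_mod_cast this
  obtain ⟨c, hcc⟩ := hdvd
  have hdle : ((j' : ℤ) - i') ≤ (j : ℤ) - i := by
    have : (j' : ℤ) ≤ j := by exact_mod_cast hcol
    have : (i : ℤ) ≤ i' := by exact_mod_cast hrow
    omega
  have hc0 : 0 ≤ c := by
    by_contra h
    push_neg at h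
    have hk : (0 : ℤ) < (k : ℤ) + 1 := by positivity
    nlinarith
  set n : ℕ := c.toNat with hndef
  have hn : (n : ℤ) = c := Int.toNat_of_nonneg hc0
  have hdeq : ((j : ℤ) - i) - (n : ℤ) * ((k : ℤ) + 1) = (j' : ℤ) - i' := by
    rw [hn, mul_comm]
    omega
  constructor
  · -- end of row
    intro hend
    have hbi : bdry g i = (j : ℤ) - i + 1 := by
      unfold bdry
      omega
    obtain ⟨m', hm'⟩ := core_closed_iter k g hg hc n i
    have hm'val : bdry g m' = (j' : ℤ) - i' + 1 := by
      rw [hm', hbi]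
      push_cast
      omega
    have hmeq : m' = i' := by
      rcases lt_trichotomy m' i' with h | h | h
      · have := bdry_anti g hg h
        omega
      · exact h
      · have := bdry_anti_le g hg (show i' + 1 ≤ m' by omega)
        omega
    rw [hmeq] at hm'val
    unfold bdry at hm'val
    omega
  · -- cell above
    intro hab
    have hbi1 : bdry g (i + 1) = (j : ℤ) - i := by
      have := h1.2
      unfold bdry
      push_cast
      omega
    obtain ⟨m', hm'⟩ := core_closed_iter k g hg hc n (i + 1)
    have hm'val : bdry g m' = (j' : ℤ) - i' := by
      rw [hm', hbi1]
      push_cast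
      omega
    have hmeq : m' = i' + 1 := by
      rcases lt_trichotomy m' (i' + 1) with h | h | h
      · have := bdry_anti_le g hg (show m' ≤ i' by omega)
        omega
      · exact h
      · have := bdry_anti g hg h
        omega
    rw [hmeq] at hm'val
    unfold bdry at hm'val
    push_cast at hm'val
    omega

end

end KSchur
end

section
/- Let γ be a (k+1)-core and let c and c′ be extremal cells of γ with the same (k+1)-residue, with c′ weakly south-east of c. If c is at the top of its column, then so is c′; and if c has a cell of γ directly to its right, then so does c′. -/
open scoped Classical

namespace KSchur

noncomputable section

private lemma colLen_eq_s5 (g : ℕ → ℕ) (hm : ∀ ⦃a b : ℕ⦄, a ≤ b → g b ≤ g a)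
    (i j : ℕ) (h1 : j < g i) (h2 : g (i + 1) ≤ j) : colLen g j = i + 1 := by
  have hset : {a : ℕ | j < g a} = Set.Iio (i + 1) := by
    ext a
    simp only [Set.mem_setOf_eq, Set.mem_Iio]
    constructor
    · intro h
      by_contra hlt
      push_neg at hlt
      have h3 : g a ≤ g (i + 1) := hm hlt
      omega
    · intro h
      have h3 : g i ≤ g a := hm (by omega)
      omega
  rw [colLen, hset, Nat.card_eq_card_toFinset]
  simp

private lemma extSE (g : ℕ → ℕ) (hm : ∀ ⦃a b : ℕ⦄, a ≤ b → g b ≤ g a)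
    (a b a' b' : ℕ) (h : Extremal g a b) (h' : Extremal g a' b')
    (hcont : (b : ℤ) - a ≤ (b' : ℤ) - a') : a' ≤ a ∧ b ≤ b' := by
  obtain ⟨hb, hb2⟩ := h
  obtain ⟨hb', hb2'⟩ := h'
  have ha : a' ≤ a := by
    by_contra hlt
    push_neg at hlt
    have h3 : g a' ≤ g (a + 1) := hm (by omega)
    omega
  refine ⟨ha, ?_⟩
  rcases Nat.eq_or_lt_of_le ha with heq | hlt
  · omega
  · have h3 : g a ≤ g (a' + 1) := hm (by omega)
    omega

private lemma adj_top (k : ℕ) (g : ℕ → ℕ) (hm : ∀ ⦃a b : ℕ⦄, a ≤ b → g b ≤ g a)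
    (hc : IsCore (k + 1) g) (i j i' j' : ℕ)
    (h1 : Extremal g i j) (h2 : Extremal g i' j') (hrow : i' ≤ i) (hcol : j ≤ j')
    (hsum : j' + i = j + i' + (k + 1)) (htop : g (i + 1) ≤ j) : g (i' + 1) ≤ j' := by
  by_contra hlt
  push_neg at hlt
  have he2 := h2.2
  have hgi' : g (i' + 1) = j' + 1 := by omega
  have hii : i' < i := by
    rcases Nat.eq_or_lt_of_le hrow with heq | h
    · subst heq; omega
    · exact h
  have hcl := colLen_eq_s5 g hm i j h1.1 htop
  have hcell : j < g (i' + 1) := by omega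
  apply hc (i' + 1) j hcell
  unfold hookLen
  rw [hgi', hcl]
  omega

private lemma adj_right (k : ℕ) (g : ℕ → ℕ) (hm : ∀ ⦃a b : ℕ⦄, a ≤ b → g b ≤ g a)
    (hc : IsCore (k + 1) g) (i j i' j' : ℕ)
    (h1 : Extremal g i j) (h2 : Extremal g i' j') (hrow : i' ≤ i) (hcol : j ≤ j')
    (hsum : j' + i = j + i' + (k + 1)) (hright : j + 1 < g i) : j' + 1 < g i' := by
  by_contra hle
  push_neg at hle
  have hgi' : g i' = j' + 1 := by have := h2.1; omega
  have hgm : g i ≤ g i' := hm hrow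
  have hjj : j < j' := by omega
  have htop : g (i + 1) ≤ j + 1 := by have := h1.2; omega
  have hcl := colLen_eq_s5 g hm i (j + 1) hright htop
  have hcell : j + 1 < g i' := by omega
  apply hc i' (j + 1) hcell
  unfold hookLen
  rw [hgi', hcl]
  omega

private lemma exists_extremal_diag (g : ℕ → ℕ) (hm : ∀ ⦃a b : ℕ⦄, a ≤ b → g b ≤ g a)
    (hz : ∃ N, g N = 0) (t : ℤ) (a0 : ℕ)
    (h0a : 0 ≤ (a0 : ℤ) + t) (h0b : (a0 : ℤ) + t < g a0) :
    ∃ a b : ℕ, Extremal g a b ∧ (b : ℤ) - a = t := by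
  obtain ⟨N, hN⟩ := hz
  set P := fun a : ℕ => 0 ≤ (a : ℤ) + t ∧ (a : ℤ) + t < g a with hP
  have hPa0 : P a0 := ⟨h0a, h0b⟩
  have ha0N : a0 ≤ N := by
    by_contra h
    push_neg at h
    have h3 : g a0 ≤ g N := hm h.le
    omega
  have hPa : P (Nat.findGreatest P N) := Nat.findGreatest_spec ha0N hPa0
  set a := Nat.findGreatest P N with ha
  have hmax : ∀ b, a < b → ¬ P b := by
    intro b hb
    by_cases hbN : b ≤ N
    · exact Nat.findGreatest_is_greatest hb hbN
    · push_neg at hbN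
      intro hPb
      have h3 : g b ≤ g N := hm hbN.le
      have := hPb.1; have := hPb.2
      omega
  obtain ⟨hPa1, hPa2⟩ := hPa
  refine ⟨a, ((a : ℤ) + t).toNat, ⟨by omega, ?_⟩, by omega⟩
  intro hlt
  exact hmax (a + 1) (by omega) ⟨by omega, by push_cast; omega⟩

private lemma exists_cell_diag (g : ℕ → ℕ) (hm : ∀ ⦃a b : ℕ⦄, a ≤ b → g b ≤ g a)
    (i j i' j' : ℕ) (hcell : j < g i) (hcell' : j' < g i') (t : ℤ)
    (hd : (j : ℤ) - i ≤ t) (hd' : t ≤ (j' : ℤ) - i') :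
    ∃ a0 : ℕ, 0 ≤ (a0 : ℤ) + t ∧ (a0 : ℤ) + t < g a0 := by
  by_cases h : 0 ≤ (i' : ℤ) + t
  · exact ⟨i', h, by omega⟩
  · push_neg at h
    refine ⟨(-t).toNat, by omega, ?_⟩
    have hle : (-t).toNat ≤ i := by omega
    have h3 : g i ≤ g (-t).toNat := hm hle
    omega

private lemma resid_shift (k a b c d : ℕ) (h : (b : ℤ) - a = (d : ℤ) - c + (k + 1)) :
    resid k a b = resid k c d := by
  have h2 : (b : ℤ) = (a : ℤ) + ((d : ℤ) - c) + (k + 1) := by omega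
  have h3 := congrArg (fun z : ℤ => (z : ZMod (k + 1))) h2
  have hk : ((k : ZMod (k + 1)) + 1) = 0 := by
    have := ZMod.natCast_self (k + 1)
    push_cast at this
    exact this
  push_cast at h3
  unfold resid
  rw [h3, hk]
  ring

private lemma main_lemma (k : ℕ) (g : ℕ → ℕ) (hg : IsPartitionFun g)
    (hc : IsCore (k + 1) g) :
    ∀ n i j i' j', Extremal g i j → Extremal g i' j' →
      resid k i j = resid k i' j' → i' ≤ i → j ≤ j' →
      j' + i = (j + i') + n →
      (g (i + 1) ≤ j → g (i' + 1) ≤ j') ∧ (j + 1 < g i → j' + 1 < g i') := by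
  intro n
  induction n using Nat.strong_induction_on with
  | _ n ih =>
    intro i j i' j' h1 h2 hres hrow hcol hn
    have hzmod : ((n : ℤ) : ZMod (k + 1)) = 0 := by
      have hℤ : (n : ℤ) = ((j' : ℤ) + i) - ((j : ℤ) + i') := by omega
      rw [hℤ]
      push_cast
      unfold resid at hres
      linear_combination -hres
    have hdvd : (k + 1) ∣ n := by
      rw [ZMod.intCast_zmod_eq_zero_iff_dvd] at hzmod
      exact_mod_cast hzmod
    rcases Nat.eq_zero_or_pos n with h0 | hpos
    · have hij : i = i' ∧ j = j' := by omega
      obtain ⟨rfl, rfl⟩ := hij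
      exact ⟨id, id⟩
    · have hk1 : k + 1 ≤ n := Nat.le_of_dvd hpos hdvd
      set t : ℤ := (j : ℤ) - i + (k + 1) with ht
      obtain ⟨a0, ha0a, ha0b⟩ :=
        exists_cell_diag g hg.1 i j i' j' h1.1 h2.1 t (by omega) (by omega)
      obtain ⟨a, b, hab, habt⟩ := exists_extremal_diag g hg.1 hg.2 t a0 ha0a ha0b
      obtain ⟨ho1a, ho1b⟩ := extSE g hg.1 i j a b h1 hab (by omega)
      obtain ⟨ho2a, ho2b⟩ := extSE g hg.1 a b i' j' hab h2 (by omega)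
      have hadj : b + i = j + a + (k + 1) := by omega
      have hres2 : resid k i' j' = resid k i j := hres.symm
      have hresab : resid k a b = resid k i' j' := by
        rw [resid_shift k a b i j (by omega)]
        exact hres
      have hih := ih (n - (k + 1)) (by omega) a b i' j' hab h2 hresab ho2a ho2b (by omega)
      exact ⟨fun h => hih.1 (adj_top k g hg.1 hc i j a b h1 hab ho1a ho1b hadj h),
             fun h => hih.2 (adj_right k g hg.1 hc i j a b h1 hab ho1a ho1b hadj h)⟩


/-- extremal cells of the same residue, `c'` weakly south-east of `c`. -/
theorem extremal_southeast (k : ℕ) (g : ℕ → ℕ) (hg : IsPartitionFun g)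
    (hc : IsCore (k + 1) g) (i j i' j' : ℕ)
    (h1 : Extremal g i j) (h2 : Extremal g i' j')
    (hres : resid k i j = resid k i' j') (hrow : i' ≤ i) (hcol : j ≤ j') :
    (g (i + 1) ≤ j → g (i' + 1) ≤ j') ∧ (j + 1 < g i → j' + 1 < g i') := by
  exact main_lemma k g hg hc ((j' + i) - (j + i')) i j i' j' h1 h2 hres hrow hcol (by omega)

end

end KSchur
end

section
/- The map 𝔭 sending a (k+1)-core γ to the sequence (λ₁, …, λ_ℓ), where λ_i is the number of cells in row i of γ with hook-length at most k, is a bijection from the set of (k+1)-cores to the set of k-bounded partitions (partitions with all parts ≤ k). -/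
open scoped Classical

namespace KSchur

noncomputable section

/-! Encode a partition `f` by its beta numbers `β i = f i - i`, a strictly decreasing sequence
with `β i = -i` for large `i`. The hook of the cell `(i, j)` is `β i - j + colLen f j - 1`, so
`f` is an `n`-core iff `β i - n` is again a beta number for every `i`; and if
`β i' = β i - (k + 1)`, the cells of row `i` with hook length at most `k` are exactly the columns
`f i' ≤ j < f i`. Hence for a `(k + 1)`-core `𝔭(f) i = k + 1 - (i' - i)`, where the jump
`i' - i ≥ 1` increases weakly with `i`: this makes `𝔭(f)` a `k`-bounded partition. Conversely
the jumps `k + 1 - λ i` determine the beta numbers by descending recursion from the rows where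
`λ` vanishes, which gives both injectivity and the inverse map. -/

def betaNum (f : ℕ → ℕ) (i : ℕ) : ℤ := f i - i

namespace IsPartitionFun

variable {f : ℕ → ℕ}

theorem antitone (hf : IsPartitionFun f) : Antitone f := hf.1

theorem exists_forall_ge_eq_zero (hf : IsPartitionFun f) : ∃ N, ∀ i, N ≤ i → f i = 0 := by
  obtain ⟨N, hN⟩ := hf.2
  exact ⟨N, fun i hi => Nat.le_zero.1 (hN ▸ hf.antitone hi)⟩

theorem lt_colLen_iff (hf : IsPartitionFun f) {i j : ℕ} : i < colLen f j ↔ j < f i := by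
  have hex : ∃ n, f n ≤ j := by
    obtain ⟨N, hN⟩ := hf.2
    exact ⟨N, by omega⟩
  have hmem : ∀ r, j < f r ↔ r < Nat.find hex := fun r =>
    ⟨fun hr => by
      by_contra! hle
      exact absurd ((hf.antitone hle).trans (Nat.find_spec hex)) (by omega),
    fun hr => by simpa using Nat.find_min hex hr⟩
  have hrows : {r : ℕ | j < f r} = Set.Iio (Nat.find hex) := Set.ext hmem
  rw [colLen, hrows, hmem]
  simp

theorem strictAnti_betaNum (hf : IsPartitionFun f) : StrictAnti (betaNum f) := by
  intro i i' h
  have := hf.antitone h.le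
  simp only [betaNum]
  omega

theorem hookLen_eq (hf : IsPartitionFun f) {i j : ℕ} (h : j < f i) :
    (hookLen f i j : ℤ) = betaNum f i - j + colLen f j - 1 := by
  have := hf.lt_colLen_iff.2 h
  simp only [hookLen, betaNum]
  omega

theorem exists_hookLen_eq (hf : IsPartitionFun f) {i : ℕ} {t : ℤ} (ht : t < betaNum f i)
    (hnot : t ∉ Set.range (betaNum f)) : ∃ j, j < f i ∧ (hookLen f i j : ℤ) = betaNum f i - t := by
  have hex : ∃ r, betaNum f r < t := by
    obtain ⟨N, hN⟩ := hf.2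
    refine ⟨N + t.natAbs + 1, ?_⟩
    have : f (N + t.natAbs + 1) ≤ f N := hf.antitone (by omega)
    simp only [betaNum]
    omega
  -- `t` falls strictly between the consecutive beta numbers of rows `r - 1` and `r`, so the
  -- column `j = t + r - 1` has length exactly `r` and its cell in row `i` has hook `β_i - t`.
  set r := Nat.find hex
  have hr : betaNum f r < t := Nat.find_spec hex
  have hir : i < r := hf.strictAnti_betaNum.lt_iff_gt.1 (hr.trans ht)
  have hprev : t < betaNum f (r - 1) :=
    lt_of_le_of_ne (not_lt.1 (Nat.find_min hex (by omega))) fun h => hnot ⟨_, h.symm⟩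
  obtain ⟨j, hj⟩ : ∃ j : ℕ, (j : ℤ) = t + r - 1 := ⟨(t + r - 1).toNat, by
    simp only [betaNum] at hr
    omega⟩
  have hcol : colLen f j = r := by
    have h1 : r - 1 < colLen f j := hf.lt_colLen_iff.2 (by simp only [betaNum] at hprev; omega)
    have h2 : ¬ r < colLen f j := fun h => by
      have := hf.lt_colLen_iff.1 h
      simp only [betaNum] at hr
      omega
    omega
  have hji : j < f i := hf.lt_colLen_iff.1 (hcol ▸ hir)
  refine ⟨j, hji, ?_⟩
  rw [hf.hookLen_eq hji, hcol]
  omega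

theorem isCore_iff (hf : IsPartitionFun f) {n : ℕ} :
    IsCore n f ↔ ∀ i, ∃ i', betaNum f i' + n = betaNum f i := by
  constructor
  · intro hc i
    by_contra! hnot
    have hn : n ≠ 0 := fun h => hnot i (by simp [h])
    obtain ⟨j, hj, hhook⟩ := hf.exists_hookLen_eq (i := i) (t := betaNum f i - n) (by omega)
      (by rintro ⟨i', h⟩; exact hnot i' (by omega))
    exact hc i j hj (by omega)
  · intro hstep i j hj hhook
    obtain ⟨i', hi'⟩ := hstep i
    have := hf.hookLen_eq hj
    have := hf.lt_colLen_iff (i := i') (j := j)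
    simp only [betaNum] at *
    omega

theorem rowCount_eq_sub (hf : IsPartitionFun f) {k i i' : ℕ}
    (h : betaNum f i' + (k + 1) = betaNum f i) : rowCount k f i = f i - f i' := by
  have hcells : {j | j < f i ∧ hookLen f i j ≤ k} = Set.Ico (f i') (f i) := by
    ext j
    simp only [Set.mem_ofPred_eq, Set.mem_Ico]
    refine (and_congr_right fun hj => ?_).trans and_comm
    have := hf.hookLen_eq hj
    have := hf.lt_colLen_iff (i := i') (j := j)
    simp only [betaNum] at *
    omega
  rw [rowCount, hcells]
  simp

end IsPartitionFun

section Cores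

variable {k : ℕ} {f : ℕ → ℕ}

theorem IsCore.exists_rowCount_add (hf : IsPartitionFun f) (hc : IsCore (k + 1) f) (i : ℕ) :
    ∃ i', i < i' ∧ betaNum f i' + (k + 1) = betaNum f i ∧ rowCount k f i + i' = i + (k + 1) := by
  obtain ⟨i', hi'⟩ := hf.isCore_iff.1 hc i
  have hii' : i < i' := hf.strictAnti_betaNum.lt_iff_gt.1 (by omega)
  have := hf.antitone hii'.le
  refine ⟨i', hii', hi', ?_⟩
  rw [hf.rowCount_eq_sub hi']
  simp only [betaNum] at hi'
  omega

theorem IsCore.rowCount_le (hf : IsPartitionFun f) (hc : IsCore (k + 1) f) (i : ℕ) :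
    rowCount k f i ≤ k := by
  obtain ⟨i', hii', -, hrow⟩ := hc.exists_rowCount_add hf i
  omega

theorem IsCore.antitone_rowCount (hf : IsPartitionFun f) (hc : IsCore (k + 1) f) :
    Antitone (rowCount k f) := by
  refine antitone_nat_of_succ_le fun i => ?_
  obtain ⟨i', -, hi', hrow⟩ := hc.exists_rowCount_add hf i
  obtain ⟨i'', -, hi'', hrow'⟩ := hc.exists_rowCount_add hf (i + 1)
  have : betaNum f (i + 1) < betaNum f i := hf.strictAnti_betaNum (Nat.lt_add_one i)
  have : i' < i'' := hf.strictAnti_betaNum.lt_iff_gt.1 (by omega)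
  omega

theorem isPartitionFun_pmapFun (hf : IsPartitionFun f) (hc : IsCore (k + 1) f) :
    IsPartitionFun (pmapFun k f) := by
  obtain ⟨N, hN⟩ := hf.2
  refine ⟨hc.antitone_rowCount hf, N, ?_⟩
  obtain ⟨i', -, hi', -⟩ := hc.exists_rowCount_add hf N
  rw [pmapFun, hf.rowCount_eq_sub hi', hN, Nat.zero_sub]

theorem eq_of_pmapFun_eq {g : ℕ → ℕ} (hf : IsPartitionFun f) (hcf : IsCore (k + 1) f)
    (hg : IsPartitionFun g) (hcg : IsCore (k + 1) g) (h : pmapFun k f = pmapFun k g) :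
    f = g := by
  suffices hβ : betaNum f = betaNum g by
    funext i
    simpa [betaNum] using congrFun hβ i
  obtain ⟨Nf, hNf⟩ := hf.exists_forall_ge_eq_zero
  obtain ⟨Ng, hNg⟩ := hg.exists_forall_ge_eq_zero
  funext i
  -- Descending induction: equal row counts give equal jumps `i' - i`, so the beta number
  -- `β_i = β_{i'} + (k + 1)` is determined by the higher rows.
  induction i using Nat.strong_decreasing_induction with
  | base =>
    refine ⟨max Nf Ng, fun m hm => ?_⟩
    simp only [betaNum, hNf m (by omega), hNg m (by omega)]
  | step i ih =>
    obtain ⟨i', hii', hi', hrow⟩ := hcf.exists_rowCount_add hf i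
    obtain ⟨i'', -, hi'', hrow'⟩ := hcg.exists_rowCount_add hg i
    have hrow_eq : rowCount k f i = rowCount k g i := congrFun h i
    obtain rfl : i' = i'' := by omega
    rw [← hi', ← hi'', ih i' hii']

end Cores

/-- The beta numbers of the core with `𝔭`-image `lam`, built from the top row `N` down:
row `i` must jump by `k + 1 - lam i` rows to reach its beta number minus `k + 1`. -/
def coreBeta (k N : ℕ) (lam : ℕ → ℕ) (i : ℕ) : ℤ :=
  if N ≤ i then -i else coreBeta k N lam (i + 1 + (k - lam i)) + (k + 1)
termination_by N - i

section CoreBeta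

variable {k N : ℕ} {lam : ℕ → ℕ}

theorem coreBeta_of_le {i : ℕ} (h : N ≤ i) : coreBeta k N lam i = -i := by
  rw [coreBeta, if_pos h]

theorem coreBeta_step (hN : ∀ i, N ≤ i → lam i = 0) (i : ℕ) :
    coreBeta k N lam (i + 1 + (k - lam i)) + (k + 1) = coreBeta k N lam i := by
  by_cases h : N ≤ i
  · rw [coreBeta_of_le h, coreBeta_of_le (by omega), hN i h, Nat.sub_zero]
    push_cast
    ring
  · conv_rhs => rw [coreBeta, if_neg h]

theorem coreBeta_strictAnti (hlam : Antitone lam) (hN : ∀ i, N ≤ i → lam i = 0) :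
    StrictAnti (coreBeta k N lam) := by
  suffices h : ∀ i j, i < j → coreBeta k N lam j < coreBeta k N lam i from fun i j => h i j
  intro i
  induction i using Nat.strong_decreasing_induction with
  | base =>
    refine ⟨N, fun m hm j hj => ?_⟩
    rw [coreBeta_of_le hm.le, coreBeta_of_le (by omega)]
    omega
  | step i ih =>
    have hsucc : coreBeta k N lam (i + 1) < coreBeta k N lam i := by
      rw [← coreBeta_step hN i, ← coreBeta_step hN (i + 1)]
      have : lam (i + 1) ≤ lam i := hlam (by omega)
      have := ih (i + 1 + (k - lam i)) (by omega) (i + 1 + 1 + (k - lam (i + 1))) (by omega)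
      omega
    intro j hj
    rcases (Nat.succ_le_of_lt hj).eq_or_lt with rfl | hj'
    · exact hsucc
    · exact (ih (i + 1) (by omega) j hj').trans hsucc

end CoreBeta

theorem exists_isCore_pmapFun_eq {k : ℕ} {lam : ℕ → ℕ} (hlam : IsPartitionFun lam)
    (hbd : IsKBounded k lam) : ∃ f, IsPartitionFun f ∧ IsCore (k + 1) f ∧ pmapFun k f = lam := by
  obtain ⟨N, hN⟩ := hlam.exists_forall_ge_eq_zero
  have hβ_anti : StrictAnti (coreBeta k N lam) := coreBeta_strictAnti hlam.antitone hN
  have hlen_anti : Antitone fun i => coreBeta k N lam i + i :=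
    antitone_nat_of_succ_le fun i => by
      have := hβ_anti (Nat.lt_add_one i)
      push_cast
      omega
  obtain ⟨f, hfβ⟩ : ∃ f : ℕ → ℕ, betaNum f = coreBeta k N lam := by
    refine ⟨fun i => (coreBeta k N lam i + i).toNat, funext fun i => ?_⟩
    have := hlen_anti (le_max_left i N)
    simp only [coreBeta_of_le (le_max_right i N)] at this
    simp only [betaNum]
    omega
  have hjump : ∀ i, betaNum f (i + 1 + (k - lam i)) + (k + 1) = betaNum f i := fun i => by
    rw [hfβ]
    exact coreBeta_step hN i
  have hf : IsPartitionFun f := by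
    refine ⟨fun i j hij => ?_, N, ?_⟩
    · have := hlen_anti hij
      have := congrFun hfβ i
      have := congrFun hfβ j
      simp only [betaNum] at *
      omega
    · have := congrFun hfβ N
      simp only [betaNum, coreBeta_of_le le_rfl] at this
      omega
  refine ⟨f, hf, hf.isCore_iff.2 fun i => ⟨_, hjump i⟩, funext fun i => ?_⟩
  rw [pmapFun, hf.rowCount_eq_sub (hjump i)]
  have := hjump i
  have := hbd i
  simp only [betaNum] at *
  omega

theorem pmap_bijective_general (k : ℕ) :
    Set.BijOn (pmapFun k) {g : ℕ → ℕ | IsPartitionFun g ∧ IsCore (k + 1) g}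
      {lam : ℕ → ℕ | IsPartitionFun lam ∧ IsKBounded k lam} := by
  refine ⟨fun g ⟨hg, hc⟩ => ⟨isPartitionFun_pmapFun hg hc, hc.rowCount_le hg⟩,
    fun g ⟨hg, hcg⟩ g' ⟨hg', hcg'⟩ h => eq_of_pmapFun_eq hg hcg hg' hcg' h, ?_⟩
  rintro lam ⟨hlam, hbd⟩
  obtain ⟨f, hf, hc, rfl⟩ := exists_isCore_pmapFun_eq hlam hbd
  exact ⟨f, ⟨hf, hc⟩, rfl⟩

/-- `𝔭` is a bijection from `(k+1)`-cores to `k`-bounded partitions. -/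
theorem pmap_bijective (k : ℕ) (hk : 0 < k) :
    Set.BijOn (pmapFun k) {g : ℕ → ℕ | IsPartitionFun g ∧ IsCore (k + 1) g}
      {lam : ℕ → ℕ | IsPartitionFun lam ∧ IsKBounded k lam} :=
  pmap_bijective_general k

end

end KSchur
end

section
/- If δ ⊂ γ are (k+1)-cores with |𝔭(γ)| = |𝔭(δ)| + 1 and γ/δ is a union of horizontal ribbons whose highest component lies in row i, then 𝔭(γ) = 𝔭(δ) + e_i, i.e., the k-bounded partitions associated to γ and δ agree in all rows except row i, where they differ by exactly one. -/
open scoped Classical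

namespace KSchur

noncomputable section

/-! Compare `𝔭(δ)` and `𝔭(γ)` row by row. Sliding the `k`-bounded cells of row `a` of `δ` to the
right by the length of the ribbon of `γ/δ` in that row gives `k`-bounded cells of `γ`: a column of
`γ` is at most one cell longer than the same column of `δ`, so hooks grow by at most one, and no
hook equals `k + 1` in the `(k + 1)`-core `γ`; the cells landing in `γ/δ` are at the top of their
columns, so their hooks are at most the ribbon length, which is `≤ k` because `γ` is a core. In the
highest row `i` the columns of `δ` are those of `γ`, so shifting by one cell less works as well and
the last cell of row `i` of `γ` is an extra `k`-bounded cell. Hence `𝔭(δ) + e_i ≤ 𝔭(γ)` entrywise,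
and as the sizes differ by one this is an equality. -/

section Partition

variable {f : ℕ → ℕ}

theorem lt_colLen_iff (hf : IsPartitionFun f) {a j : ℕ} : a < colLen f j ↔ j < f a := by
  have hex : ∃ n, f n ≤ j := by
    obtain ⟨N, hN⟩ := hf.2
    exact ⟨N, by omega⟩
  have hcol : {i | j < f i} = Set.Iio (Nat.find hex) := by
    ext i
    simp only [Set.mem_ofPred_eq, Set.mem_Iio]
    constructor
    · intro hi
      by_contra hle
      have := hf.1 (not_lt.mp hle)
      have := Nat.find_spec hex
      omega
    · intro hi
      exact not_le.mp (Nat.find_min hex hi)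
  rw [colLen, hcol, show Nat.card (Set.Iio (Nat.find hex)) = Nat.find hex by simp, ← Set.mem_Iio,
    ← hcol, Set.mem_ofPred_eq]

theorem colLen_antitone (hf : IsPartitionFun f) : Antitone (colLen f) := by
  intro j j' hjj
  by_contra h
  have := (lt_colLen_iff hf).mp (not_le.mp h)
  have := (lt_colLen_iff hf).mpr (show j < f (colLen f j) by omega)
  omega

theorem hookLen_add (hf : IsPartitionFun f) {a j : ℕ} (h : j < f a) :
    hookLen f a j + j + a + 1 = f a + colLen f j := by
  have := (lt_colLen_iff hf).mpr h
  unfold hookLen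
  omega

theorem kBoundedCount_zero (hf : IsPartitionFun f) : kBoundedCount 0 f = 0 := by
  rw [kBoundedCount, Nat.card_eq_zero]
  left
  refine ⟨fun cell => ?_⟩
  obtain ⟨⟨a, j⟩, hj, hhook⟩ := cell
  have := hookLen_add hf hj
  have := (lt_colLen_iff hf).mpr hj
  omega

def boundedRow (k : ℕ) (f : ℕ → ℕ) (a : ℕ) : Set ℕ := {j | j < f a ∧ hookLen f a j ≤ k}

theorem rowCount_eq_ncard (k : ℕ) (f : ℕ → ℕ) (a : ℕ) :
    rowCount k f a = (boundedRow k f a).ncard :=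
  Nat.card_coe_set_eq _

theorem finite_boundedRow (k : ℕ) (f : ℕ → ℕ) (a : ℕ) : (boundedRow k f a).Finite :=
  (Set.finite_Iio (f a)).subset fun _ hj => hj.1

theorem kBoundedCount_eq_sum_rowCount (hf : IsPartitionFun f) (k : ℕ) {N : ℕ}
    (hN : f N = 0) : kBoundedCount k f = ∑ a ∈ Finset.range N, rowCount k f a := by
  have hrow : ∀ a, rowCount k f a =
      ((Finset.range (f 0)).filter fun j => j < f a ∧ hookLen f a j ≤ k).card := by
    intro a
    rw [rowCount_eq_ncard, ← Set.ncard_coe_finset]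
    congr 1
    ext j
    simp only [boundedRow, Finset.coe_filter, Finset.mem_range, Set.mem_ofPred_eq]
    have := hf.1 (Nat.zero_le a)
    omega
  have hcount : kBoundedCount k f = ((Finset.range N ×ˢ Finset.range (f 0)).filter
      fun p => p.2 < f p.1 ∧ hookLen f p.1 p.2 ≤ k).card := by
    rw [kBoundedCount, Nat.card_coe_set_eq, ← Set.ncard_coe_finset]
    congr 1
    ext ⟨a, j⟩
    simp only [Finset.coe_filter, Finset.mem_product, Finset.mem_range, Set.mem_ofPred_eq]
    have := hf.1 (Nat.zero_le a)
    have : N ≤ a → f a ≤ f N := fun ha => hf.1 ha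
    omega
  rw [hcount, Finset.card_filter, Finset.sum_product]
  simp only [hrow, Finset.card_filter]

end Partition

theorem colLen_eq_of_lt {d g : ℕ → ℕ} (hd : IsPartitionFun d) (hle : ∀ a, d a ≤ g a) {i j : ℕ}
    (htop : ∀ a, i < a → g a = d a) (hj : j < d i) : colLen g j = colLen d j := by
  unfold colLen
  congr 3
  ext a
  show j < g a ↔ j < d a
  rcases le_or_gt a i with hai | hia
  · have := hd.1 hai
    have := hle a
    omega
  · rw [htop a hia]

namespace HorizRibbons

variable {d g : ℕ → ℕ}

theorem succ_le (h : HorizRibbons g d) (hd : IsPartitionFun d) {a : ℕ} (ha : d a < g a) :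
    g (a + 1) ≤ d a := by
  by_contra hlt
  exact h.2 a (d a) ⟨le_rfl, ha⟩ ⟨hd.1 (Nat.le_succ a), not_le.mp hlt⟩

theorem colLen_eq (h : HorizRibbons g d) (hd : IsPartitionFun d) (hg : IsPartitionFun g)
    {a b : ℕ} (hb : d a ≤ b) (hb' : b < g a) : colLen g b = a + 1 := by
  have := (lt_colLen_iff hg).mpr hb'
  have := h.succ_le hd (hb.trans_lt hb')
  have := (lt_colLen_iff hg (a := a + 1) (j := b)).not.mpr (by omega)
  omega

theorem hookLen_eq (h : HorizRibbons g d) (hd : IsPartitionFun d) (hg : IsPartitionFun g)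
    {a b : ℕ} (hb : d a ≤ b) (hb' : b < g a) : hookLen g a b = g a - b := by
  have := h.colLen_eq hd hg hb hb'
  unfold hookLen
  omega

-- A ribbon of length `> k` would contain the cell at distance `k + 1` from its end.
theorem sub_le_of_isCore (h : HorizRibbons g d) (hd : IsPartitionFun d) (hg : IsPartitionFun g)
    {k : ℕ} (hgc : IsCore (k + 1) g) (a : ℕ) : g a - d a ≤ k := by
  by_contra hlt
  have hb : d a ≤ g a - (k + 1) := by omega
  have hb' : g a - (k + 1) < g a := by omega
  exact hgc a _ hb' (by rw [h.hookLen_eq hd hg hb hb']; omega)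

theorem hookLen_le_of_isCore (h : HorizRibbons g d) (hd : IsPartitionFun d)
    (hg : IsPartitionFun g) {k : ℕ} (hgc : IsCore (k + 1) g) {a b : ℕ} (hb : d a ≤ b)
    (hb' : b < g a) : hookLen g a b ≤ k := by
  have := h.sub_le_of_isCore hd hg hgc a
  rw [h.hookLen_eq hd hg hb hb']
  omega

theorem colLen_le_succ (h : HorizRibbons g d) (hd : IsPartitionFun d) (hg : IsPartitionFun g)
    (j : ℕ) : colLen g j ≤ colLen d j + 1 := by
  by_contra hlt
  set a := colLen d j
  have hda : d a ≤ j := not_lt.mp ((lt_colLen_iff hd).not.mp (lt_irrefl a))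
  have := hd.1 (Nat.le_add_right a 1)
  exact h.2 a j ⟨hda, (lt_colLen_iff hg).mp (by omega)⟩
    ⟨by omega, (lt_colLen_iff hg).mp (by omega)⟩

-- `hcol`: on the columns reached, `g` is longer than `d` by at most `1 + s - (g a - d a)`, which
-- lets hooks grow by at most one under the shift.
theorem add_mem_boundedRow (h : HorizRibbons g d) (hd : IsPartitionFun d)
    (hg : IsPartitionFun g) {k : ℕ} (hgc : IsCore (k + 1) g) {a s : ℕ} (hs : d a + s ≤ g a)
    (hcol : ∀ c, s ≤ c → c < d a → g a + colLen g c ≤ d a + s + colLen d c + 1) {j : ℕ}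
    (hj : j ∈ boundedRow k d a) : j + s ∈ boundedRow k g a := by
  obtain ⟨hjd, hhook⟩ := hj
  refine ⟨by omega, ?_⟩
  rcases lt_or_ge (j + s) (d a) with hin | hout
  · have := hookLen_add hd hjd
    have := hookLen_add hg (show j + s < g a by omega)
    have := colLen_antitone hd (Nat.le_add_right j s)
    have := hcol (j + s) (Nat.le_add_left s j) hin
    have := hgc a (j + s) (by omega)
    omega
  · exact h.hookLen_le_of_isCore hd hg hgc hout (by omega)

theorem rowCount_le (h : HorizRibbons g d) (hd : IsPartitionFun d) (hg : IsPartitionFun g)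
    {k : ℕ} (hgc : IsCore (k + 1) g) (a : ℕ) : rowCount k d a ≤ rowCount k g a := by
  rw [rowCount_eq_ncard, rowCount_eq_ncard,
    ← Set.ncard_image_of_injective _ (add_left_injective (g a - d a))]
  refine Set.ncard_le_ncard ?_ (finite_boundedRow k g a)
  rintro _ ⟨j, hj, rfl⟩
  have := h.1 a
  exact h.add_mem_boundedRow hd hg hgc (by omega)
    (fun c _ _ => by have := h.colLen_le_succ hd hg c; omega) hj

theorem rowCount_lt (h : HorizRibbons g d) (hd : IsPartitionFun d) (hg : IsPartitionFun g)
    {k : ℕ} (hk : 0 < k) (hgc : IsCore (k + 1) g) {i : ℕ} (hi : d i < g i)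
    (htop : ∀ a, i < a → g a = d a) : rowCount k d i < rowCount k g i := by
  set s := g i - d i - 1
  have hsub : (· + s) '' boundedRow k d i ⊆ boundedRow k g i := by
    rintro _ ⟨j, hj, rfl⟩
    exact h.add_mem_boundedRow hd hg hgc (by omega)
      (fun c _ hc => by rw [colLen_eq_of_lt hd h.1 htop hc]; omega) hj
  have hlast : g i - 1 ∈ boundedRow k g i :=
    ⟨by omega, by rw [h.hookLen_eq hd hg (by omega) (by omega)]; omega⟩
  have hnew : g i - 1 ∉ (· + s) '' boundedRow k d i := by
    rintro ⟨j, hj, hjs⟩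
    dsimp only at hjs
    have := hj.1
    omega
  calc rowCount k d i < ((· + s) '' boundedRow k d i).ncard + 1 := by
        rw [Set.ncard_image_of_injective _ (add_left_injective s), rowCount_eq_ncard]
        omega
    _ = (insert (g i - 1) ((· + s) '' boundedRow k d i)).ncard :=
        (Set.ncard_insert_of_notMem hnew ((finite_boundedRow k d i).image _)).symm
    _ ≤ rowCount k g i := by
        rw [rowCount_eq_ncard]
        exact Set.ncard_le_ncard (Set.insert_subset hlast hsub) (finite_boundedRow k g i)

end HorizRibbons

/-- if `γ/δ` is a union of horizontal ribbons, the highest in row `i`,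
and `γ` has one more `k`-bounded cell, then `𝔭(γ) = 𝔭(δ) + e_i`. -/
theorem horiz_ribbons_pmap (k : ℕ) (d g : ℕ → ℕ)
    (hd : IsPartitionFun d ∧ IsCore (k + 1) d) (hg : IsPartitionFun g ∧ IsCore (k + 1) g)
    (hcnt : kBoundedCount k g = kBoundedCount k d + 1)
    (hhor : HorizRibbons g d) (i : ℕ) (hi : d i < g i) (htop : ∀ a, i < a → g a = d a) :
    ∀ j, pmapFun k g j = pmapFun k d j + (if j = i then 1 else 0) := by
  obtain ⟨hdp, -⟩ := hd
  obtain ⟨hgp, hgc⟩ := hg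
  have hk : 0 < k := by
    by_contra h0
    rw [Nat.eq_zero_of_not_pos h0, kBoundedCount_zero hgp] at hcnt
    omega
  intro j
  obtain ⟨N, hN⟩ := hgp.2
  set M := max N (j + 1)
  have hgM : g M = 0 := Nat.eq_zero_of_le_zero (hN ▸ hgp.1 (le_max_left N (j + 1)))
  have hdM : d M = 0 := Nat.eq_zero_of_le_zero (hgM ▸ hhor.1 M)
  have hiM : i ∈ Finset.range M := by
    by_contra hMi
    have := hgp.1 (not_lt.mp (Finset.mem_range.not.mp hMi))
    omega
  have hle : ∀ a ∈ Finset.range M,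
      rowCount k d a + (if a = i then 1 else 0) ≤ rowCount k g a := by
    intro a _
    split_ifs with hai
    · exact hai ▸ hhor.rowCount_lt hdp hgp hk hgc hi htop
    · exact hhor.rowCount_le hdp hgp hgc a
  have hsum : ∑ a ∈ Finset.range M, (rowCount k d a + if a = i then 1 else 0) =
      ∑ a ∈ Finset.range M, rowCount k g a := by
    rw [Finset.sum_add_distrib, Finset.sum_ite_eq', if_pos hiM,
      ← kBoundedCount_eq_sum_rowCount hdp k hdM, ← kBoundedCount_eq_sum_rowCount hgp k hgM, hcnt]
  exact ((Finset.sum_eq_sum_iff_of_le hle).mp hsum j (by simp [M])).symm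

end

end KSchur
end
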